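/- Let T₁,…,T_m be quaternion n₁×n₂ matrices and μ a unit pure quaternion. Then every scalar entry of (F_μ ⊗ I_{n₁})·bcirc(T)·(F_μᴴ ⊗ I_{n₂}) at row (s,i), column (t,j) with block indices satisfying s ≠ t and s + t ≢ 0 (mod m) is zero; i.e., the nonzero blocks appear only on the block diagonal and at block positions (s,t) with s + t ≡ 0 (mod m). -/

import Mathlib

/-!
Let `φ : ℂ →ₐ[ℝ] ℍ` send `i` to `μ` and `ζ = exp(2πi/m)`, so that `ω = φ(ζ⁻¹)`. Split a quaternion
as `a = a₊ + a₋` with `a₊` commuting and `a₋` anticommuting with `μ`; then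
`φ(x) a φ(y) = a₊ φ(xy) + a₋ φ(x̄ y)`. After substituting `u = k + v`, the `((s,i),(t,j))` entry
is `(1/m) ∑ₖ (a₊ φ(∑ᵥ ζ^(-s(k+v)+tv)) + a₋ φ(∑ᵥ ζ^(s(k+v)+tv)))` with `a = (T k) i j`, and both
geometric sums vanish: the first because `s ≠ t`, the second because `m ∤ s + t`.
-/

open Quaternion Matrix Kronecker

/-- `ω = exp(−2πμ/m)`, the quaternion exponential of `(−2π/m)·μ`. -/
noncomputable def qomega (m : ℕ) (μ : ℍ[ℝ]) : ℍ[ℝ] :=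
  NormedSpace.exp ((-(2 * Real.pi) / m : ℝ) • μ)

/-- The `m×m` discrete quaternion Fourier transform matrix,
`(F_μ)_{uv} = (1/√m)·ω^{uv}`. -/
noncomputable def qdft (m : ℕ) (μ : ℍ[ℝ]) : Matrix (Fin m) (Fin m) ℍ[ℝ] :=
  Matrix.of fun u v => ((Real.sqrt m)⁻¹ : ℝ) • (qomega m μ) ^ ((u : ℕ) * (v : ℕ))

/-- The block circulant matrix of the frontal slices `T₁, …, T_m`: its `(s,t)` block
(0-indexed) is `T_{((s−t) mod m)+1}`. -/
noncomputable def bcirc {m n₁ n₂ : ℕ} (T : Fin m → Matrix (Fin n₁) (Fin n₂) ℍ[ℝ]) :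
    Matrix (Fin m × Fin n₁) (Fin m × Fin n₂) ℍ[ℝ] :=
  Matrix.of fun p q => T (p.1 - q.1) p.2 q.2

open Complex ComplexConjugate

noncomputable section ImaginaryUnit

variable {A : Type*} [Ring A]

theorem mul_mul_mul_of_mul_self_eq_neg_one {μ : A} (hμ : μ * μ = -1) (a : A) :
    μ * (μ * a * μ) = -(a * μ) ∧ μ * a * μ * μ = -(μ * a) :=
  ⟨by rw [← mul_assoc, ← mul_assoc, hμ, neg_one_mul, neg_mul], by rw [mul_assoc, hμ, mul_neg_one]⟩

variable [Algebra ℝ A]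

/-- For `μ * μ = -1`, `a = commPart μ a + anticommPart μ a` splits `a` into a part commuting
with `μ` and a part anticommuting with it. -/
def commPart (μ a : A) : A := (2 : ℝ)⁻¹ • (a - μ * a * μ)

def anticommPart (μ a : A) : A := (2 : ℝ)⁻¹ • (a + μ * a * μ)

theorem commPart_add_anticommPart (μ a : A) : commPart μ a + anticommPart μ a = a := by
  rw [commPart, anticommPart, ← smul_add, sub_add_add_cancel, ← two_smul ℝ, smul_smul,
    inv_mul_cancel₀ two_ne_zero, one_smul]

variable {μ : A}

theorem commute_commPart (hμ : μ * μ = -1) (a : A) : Commute μ (commPart μ a) := by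
  obtain ⟨h₁, h₂⟩ := mul_mul_mul_of_mul_self_eq_neg_one hμ a
  show μ * commPart μ a = commPart μ a * μ
  rw [commPart, mul_smul_comm, smul_mul_assoc, mul_sub, sub_mul, h₁, h₂, sub_neg_eq_add,
    sub_neg_eq_add, add_comm]

theorem mul_anticommPart (hμ : μ * μ = -1) (a : A) :
    μ * anticommPart μ a = -(anticommPart μ a * μ) := by
  obtain ⟨h₁, h₂⟩ := mul_mul_mul_of_mul_self_eq_neg_one hμ a
  rw [anticommPart, mul_smul_comm, smul_mul_assoc, ← smul_neg, mul_add, add_mul, h₁, h₂,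
    neg_add, neg_neg, add_comm]

namespace Complex

theorem liftAux_commute (hμ : μ * μ = -1) {a : A} (ha : Commute μ a) (w : ℂ) :
    Commute (liftAux μ hμ w) a := by
  rw [liftAux_apply]
  exact (Algebra.commute_algebraMap_left _ _).add_left (ha.smul_left _)

theorem liftAux_mul_of_anticommute (hμ : μ * μ = -1) {a : A} (ha : μ * a = -(a * μ)) (w : ℂ) :
    liftAux μ hμ w * a = a * liftAux μ hμ (conj w) := by
  simp [liftAux_apply, add_mul, mul_add, Algebra.commutes, ha]

theorem liftAux_mul_mul_liftAux (hμ : μ * μ = -1) (x : ℂ) (a : A) (y : ℂ) :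
    liftAux μ hμ x * a * liftAux μ hμ y =
      commPart μ a * liftAux μ hμ (x * y) + anticommPart μ a * liftAux μ hμ (conj x * y) := by
  conv_lhs => rw [← commPart_add_anticommPart μ a]
  rw [mul_add, add_mul, (liftAux_commute hμ (commute_commPart hμ a) x).eq,
    liftAux_mul_of_anticommute hμ (mul_anticommPart hμ a), mul_assoc, mul_assoc, map_mul, map_mul]

end Complex

end ImaginaryUnit

theorem Quaternion.mul_self_eq_neg_one {μ : ℍ[ℝ]} (hpure : μ.re = 0) (hunit : ‖μ‖ = 1) :
    μ * μ = -1 := by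
  rw [← sq, Quaternion.sq_eq_neg_normSq.mpr hpure, Quaternion.normSq_eq_norm_mul_self, hunit,
    mul_one, Quaternion.coe_one]

namespace Complex

theorem star_liftAux {μ : ℍ[ℝ]} (hμ : μ * μ = -1) (hpure : μ.re = 0) (w : ℂ) :
    star (liftAux μ hμ w) = liftAux μ hμ (conj w) := by
  simp [liftAux_apply, Quaternion.star_eq_neg.mpr hpure]

theorem conj_exp_two_pi_I_div (m : ℕ) :
    conj (exp (2 * Real.pi * I / m)) = (exp (2 * Real.pi * I / m))⁻¹ := by
  rw [← exp_conj, ← exp_neg]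
  simp [neg_div, map_ofNat]

end Complex

theorem qomega_eq_liftAux (m : ℕ) {μ : ℍ[ℝ]} (hμ : μ * μ = -1) :
    qomega m μ = liftAux μ hμ (exp (2 * Real.pi * I / m))⁻¹ := by
  have hexp : (exp (2 * Real.pi * I / m))⁻¹ = NormedSpace.exp ((-(2 * Real.pi) / m : ℝ) • I) := by
    rw [← exp_neg, ← exp_eq_exp_ℂ, real_smul]
    push_cast
    ring_nf
  rw [qomega, hexp, NormedSpace.map_exp (liftAux μ hμ)
      (liftAux μ hμ).toLinearMap.continuous_of_finiteDimensional,
    map_smul, liftAux_apply_I]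

theorem qdft_apply_eq_liftAux {m : ℕ} {μ : ℍ[ℝ]} (hμ : μ * μ = -1) (u v : Fin m) :
    qdft m μ u v =
      (Real.sqrt m)⁻¹ • liftAux μ hμ ((exp (2 * Real.pi * I / m))⁻¹ ^ ((u : ℕ) * v)) := by
  rw [qdft, of_apply, qomega_eq_liftAux m hμ, map_pow]

theorem star_qdft_apply_eq_liftAux {m : ℕ} {μ : ℍ[ℝ]} (hμ : μ * μ = -1) (hpure : μ.re = 0)
    (u v : Fin m) :
    star (qdft m μ u v) =
      (Real.sqrt m)⁻¹ • liftAux μ hμ (exp (2 * Real.pi * I / m) ^ ((u : ℕ) * v)) := by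
  rw [qdft_apply_eq_liftAux hμ, Quaternion.star_smul, star_liftAux hμ hpure, map_pow, map_inv₀,
    conj_exp_two_pi_I_div, inv_inv]

theorem sum_pow_mul_val_add_mul_pow_eq_zero {K : Type*} [Field K] {m : ℕ} {ζ ξ : K}
    (hζ : ζ ^ m = 1) (hξ : ξ ^ m = 1) {s t : ℕ} (h : ζ ^ s * ξ ^ t ≠ 1) (k : Fin m) :
    ∑ v : Fin m, ζ ^ (s * ↑(k + v)) * ξ ^ (t * ↑v) = 0 := by
  have hζs : (ζ ^ s) ^ m = 1 := by rw [pow_right_comm, hζ, one_pow]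
  have hratio : (ζ ^ s * ξ ^ t) ^ m = 1 := by
    rw [mul_pow, hζs, pow_right_comm, hξ, one_pow, one_mul]
  have hterm (v : Fin m) :
      ζ ^ (s * ↑(k + v)) * ξ ^ (t * ↑v) = ζ ^ (s * ↑k) * (ζ ^ s * ξ ^ t) ^ (v : ℕ) := by
    rw [pow_mul, Fin.val_add, ← pow_eq_pow_mod _ hζs, pow_add, mul_pow, pow_mul, pow_mul,
      mul_assoc]
  rw [Fintype.sum_congr _ _ hterm, ← Finset.mul_sum,
    Fin.sum_univ_eq_sum_range (fun v => (ζ ^ s * ξ ^ t) ^ v), geom_sum_eq h, hratio, sub_self,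
    zero_div, mul_zero]

theorem Fintype.sum_sum_sub {G M : Type*} [AddCommGroup G] [Fintype G] [AddCommMonoid M]
    (f : G → G → G → M) : ∑ u, ∑ v, f (u - v) u v = ∑ k, ∑ v, f k (k + v) v :=
  calc ∑ u, ∑ v, f (u - v) u v = ∑ v, ∑ u, f (u - v) u v := Finset.sum_comm
    _ = ∑ v, ∑ k, f k (k + v) v := Fintype.sum_congr _ _ fun v =>
      Fintype.sum_equiv (Equiv.subRight v) _ _ fun u => by simp
    _ = ∑ k, ∑ v, f k (k + v) v := Finset.sum_comm

theorem kronecker_one_mul_bcirc_mul_kronecker_one_apply {m n₁ n₂ : ℕ} [NeZero m]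
    (F G : Matrix (Fin m) (Fin m) ℍ[ℝ]) (T : Fin m → Matrix (Fin n₁) (Fin n₂) ℍ[ℝ])
    (s t : Fin m) (i : Fin n₁) (j : Fin n₂) :
    ((F ⊗ₖ (1 : Matrix (Fin n₁) (Fin n₁) ℍ[ℝ])) * bcirc T
        * (G ⊗ₖ (1 : Matrix (Fin n₂) (Fin n₂) ℍ[ℝ]))) (s, i) (t, j) =
      ∑ k, ∑ v, F s (k + v) * T k i j * G v t := by
  rw [← Fintype.sum_sum_sub fun k u v => F s u * T k i j * G v t]
  simp only [bcirc, Matrix.mul_apply, kroneckerMap_apply, one_apply, mul_ite, mul_one, mul_zero,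
    of_apply, ite_mul, zero_mul, Fintype.sum_prod_type, Finset.sum_ite_eq, Finset.mem_univ,
    ↓reduceIte, Finset.sum_mul, mul_assoc, Finset.sum_ite_eq']
  exact Finset.sum_comm

theorem sum_qdft_mul_mul_star_qdft_eq_zero {m : ℕ} {μ : ℍ[ℝ]} (hpure : μ.re = 0)
    (hunit : ‖μ‖ = 1) {s t : Fin m} (hst : s ≠ t) (hmod : ((s : ℕ) + t) % m ≠ 0) (k : Fin m)
    (a : ℍ[ℝ]) : ∑ v, qdft m μ s (k + v) * a * star (qdft m μ t v) = 0 := by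
  have hμ := Quaternion.mul_self_eq_neg_one hpure hunit
  set ζ := exp (2 * Real.pi * I / m)
  have hm : m ≠ 0 := (Fin.pos s).ne'
  have hζ : IsPrimitiveRoot ζ m := isPrimitiveRoot_exp m hm
  have hsub : ∑ v : Fin m, ζ⁻¹ ^ ((s : ℕ) * ↑(k + v)) * ζ ^ ((t : ℕ) * v) = 0 := by
    refine sum_pow_mul_val_add_mul_pow_eq_zero hζ.inv.pow_eq_one hζ.pow_eq_one ?_ k
    rw [inv_pow, Ne, inv_mul_eq_one₀ (pow_ne_zero _ (hζ.ne_zero hm))]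
    exact fun h => hst (Fin.ext (hζ.pow_inj s.2 t.2 h))
  have hadd : ∑ v : Fin m, ζ ^ ((s : ℕ) * ↑(k + v)) * ζ ^ ((t : ℕ) * v) = 0 := by
    refine sum_pow_mul_val_add_mul_pow_eq_zero hζ.pow_eq_one hζ.pow_eq_one ?_ k
    rwa [← pow_add, Ne, hζ.pow_eq_one_iff_dvd, Nat.dvd_iff_mod_eq_zero]
  calc ∑ v, qdft m μ s (k + v) * a * star (qdft m μ t v)
      = ∑ v, ((Real.sqrt m)⁻¹ * (Real.sqrt m)⁻¹) •
          (commPart μ a * liftAux μ hμ (ζ⁻¹ ^ ((s : ℕ) * ↑(k + v)) * ζ ^ ((t : ℕ) * v))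
            + anticommPart μ a * liftAux μ hμ (ζ ^ ((s : ℕ) * ↑(k + v)) * ζ ^ ((t : ℕ) * v))) := by
        refine Fintype.sum_congr _ _ fun v => ?_
        rw [qdft_apply_eq_liftAux hμ, star_qdft_apply_eq_liftAux hμ hpure, smul_mul_assoc,
          smul_mul_assoc, mul_smul_comm, smul_smul, liftAux_mul_mul_liftAux, map_pow, map_inv₀,
          conj_exp_two_pi_I_div, inv_inv]
    _ = ((Real.sqrt m)⁻¹ * (Real.sqrt m)⁻¹) •
          (commPart μ a * liftAux μ hμ (∑ v : Fin m, ζ⁻¹ ^ ((s : ℕ) * ↑(k + v)) * ζ ^ ((t : ℕ) * v))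
            + anticommPart μ a * liftAux μ hμ
                (∑ v : Fin m, ζ ^ ((s : ℕ) * ↑(k + v)) * ζ ^ ((t : ℕ) * v))) := by
        rw [← Finset.smul_sum, Finset.sum_add_distrib, ← Finset.mul_sum, ← Finset.mul_sum,
          ← map_sum, ← map_sum]
    _ = 0 := by simp only [hsub, hadd, map_zero, mul_zero, add_zero, smul_zero]

theorem qdft_bcirc_support_general (m n₁ n₂ : ℕ) (μ : ℍ[ℝ])
    (hpure : μ.re = 0) (hunit : ‖μ‖ = 1) (T : Fin m → Matrix (Fin n₁) (Fin n₂) ℍ[ℝ]) :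
    ∀ (s t : Fin m) (i : Fin n₁) (j : Fin n₂), s ≠ t → ((s : ℕ) + (t : ℕ)) % m ≠ 0 →
      ((qdft m μ ⊗ₖ (1 : Matrix (Fin n₁) (Fin n₁) ℍ[ℝ]))
        * bcirc T
        * ((qdft m μ)ᴴ ⊗ₖ (1 : Matrix (Fin n₂) (Fin n₂) ℍ[ℝ]))) (s, i) (t, j) = 0 := by
  intro s t i j hst hmod
  have : NeZero m := ⟨(Fin.pos s).ne'⟩
  rw [kronecker_one_mul_bcirc_mul_kronecker_one_apply]
  exact Finset.sum_eq_zero fun k _ =>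
    sum_qdft_mul_mul_star_qdft_eq_zero hpure hunit hst hmod k (T k i j)

/-- for quaternion frontal slices `T₁,…,T_m` and a unit pure quaternion `μ`,
every scalar entry of `(F_μ ⊗ I)·bcirc(T)·(F_μᴴ ⊗ I)` at row `(s,i)`, column `(t,j)` with
`s ≠ t` and `s + t ≢ 0 (mod m)` is zero; i.e. nonzero blocks appear only on the block
diagonal and at block positions `(s,t)` with `s + t ≡ 0 (mod m)`. -/
theorem qdft_bcirc_support (m n₁ n₂ : ℕ) (hm : 1 ≤ m) (μ : ℍ[ℝ])
    (hpure : μ.re = 0) (hunit : ‖μ‖ = 1) (T : Fin m → Matrix (Fin n₁) (Fin n₂) ℍ[ℝ]) :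
    ∀ (s t : Fin m) (i : Fin n₁) (j : Fin n₂), s ≠ t → ((s : ℕ) + (t : ℕ)) % m ≠ 0 →
      ((qdft m μ ⊗ₖ (1 : Matrix (Fin n₁) (Fin n₁) ℍ[ℝ]))
        * bcirc T
        * ((qdft m μ)ᴴ ⊗ₖ (1 : Matrix (Fin n₂) (Fin n₂) ℍ[ℝ]))) (s, i) (t, j) = 0 :=
  qdft_bcirc_support_general m n₁ n₂ μ hpure hunit T
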